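/- arXiv:1612.08442 — 4 statements merged into one kernel-verified Lean document; each statement's English description precedes it below -/
import Mathlib

section
/- For all t in [-1,1], arccos(t) = π/2 - Σ_{n=0}^∞ (binom(2n,n) / (4^n (2n+1))) t^{2n+1}, i.e. the Maclaurin series of arccos converges on the closed interval and all coefficients of the power series A(t) = π/2 - arccos(t) are positive. -/
/-!
Since `π/2 - arccos = arcsin`, this is the Maclaurin series of `arcsin`. The binomial series
gives `(1 - x)^(-1/2) = ∑ C(2n,n)/4ⁿ xⁿ` for `|x| < 1`, because
`multichoose (1/2) n = C(2n,n)/4ⁿ`. Substituting `x = t²` and integrating termwise, the odd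
series and `arcsin` have the same derivative on `(-1, 1)` and agree at `0`. At `t = 1` the terms
are nonnegative, so letting `t → 1⁻` bounds every partial sum by `arcsin 1 = π/2`, which gives
convergence, and the sum is squeezed to `π/2`; `t = -1` follows by oddness.
-/

open Real Filter Topology Set Nat

theorem ascPochhammer_eval_half_mul_four_pow (n : ℕ) :
    (ascPochhammer ℝ n).eval (1 / 2) * 4 ^ n = centralBinom n * n ! := by
  induction n with
  | zero => simp
  | succ n ih =>
    have h : ((n + 1 : ℕ) : ℝ) * centralBinom (n + 1) = 2 * (2 * n + 1) * centralBinom n := by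
      exact_mod_cast Nat.succ_mul_centralBinom_succ n
    rw [ascPochhammer_succ_eval, factorial_succ, pow_succ]
    push_cast at h ⊢
    linear_combination (2 * (2 * (n:ℝ) + 1)) * ih - (n ! : ℝ) * h

theorem Ring.multichoose_one_half (n : ℕ) :
    Ring.multichoose (1 / 2 : ℝ) n = centralBinom n / 4 ^ n := by
  have h := Ring.factorial_nsmul_multichoose_eq_ascPochhammer (1 / 2 : ℝ) n
  rw [Polynomial.ascPochhammer_smeval_eq_eval, nsmul_eq_mul] at h
  have h4 := ascPochhammer_eval_half_mul_four_pow n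
  rw [← h, mul_assoc, mul_comm _ (n ! : ℝ)] at h4
  rw [eq_div_iff (by positivity)]
  exact mul_left_cancel₀ (by positivity) h4

theorem hasSum_centralBinom_div_four_pow_mul_pow {x : ℝ} (hx : |x| < 1) :
    HasSum (fun n ↦ (centralBinom n : ℝ) / 4 ^ n * x ^ n) (1 / √(1 - x)) := by
  have h := (one_div_one_sub_rpow_hasFPowerSeriesOnBall_zero (1 / 2)).hasSum
    (y := x) (by simpa [enorm_eq_nnnorm, ← NNReal.coe_lt_coe] using hx)
  simp only [FormalMultilinearSeries.ofScalars_apply_eq, zero_add, smul_eq_mul,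
    ← Ring.multichoose_eq, Ring.multichoose_one_half] at h
  rwa [Real.sqrt_eq_rpow]

theorem hasSum_of_tendsto_of_nonneg_of_le {α : Type*} {l : Filter α} [l.NeBot]
    {F : α → ℕ → ℝ} {f : ℕ → ℝ} {S : α → ℝ} {L : ℝ}
    (hF_nonneg : ∀ᶠ x in l, ∀ n, 0 ≤ F x n) (hF_le : ∀ᶠ x in l, ∀ n, F x n ≤ f n)
    (hS : ∀ᶠ x in l, HasSum (F x) (S x)) (hF : ∀ n, Tendsto (F · n) l (𝓝 (f n)))
    (hSL : Tendsto S l (𝓝 L)) : HasSum f L := by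
  have hf_nonneg (n : ℕ) : 0 ≤ f n :=
    ge_of_tendsto (hF n) (hF_nonneg.mono fun x hx ↦ hx n)
  have hpartial (N : ℕ) : ∑ n ∈ Finset.range N, f n ≤ L := by
    refine le_of_tendsto_of_tendsto (tendsto_finsetSum _ fun n _ ↦ hF n) hSL ?_
    filter_upwards [hF_nonneg, hS] with x hx hxS
    exact sum_le_hasSum _ (fun n _ ↦ hx n) hxS
  have hf : Summable f := summable_of_sum_range_le hf_nonneg hpartial
  have hL : L ≤ ∑' n, f n := by
    refine le_of_tendsto hSL ?_
    filter_upwards [hF_le, hS] with x hx hxS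
    exact hasSum_le hx hxS hf.hasSum
  exact (le_antisymm (Real.tsum_le_of_sum_range_le hf_nonneg hpartial) hL) ▸ hf.hasSum

section OddPowerSeries

variable {a : ℕ → ℝ}

theorem summable_div_mul_odd_pow (ha : ∀ n, |a n| ≤ 1) {y : ℝ} (hy : |y| < 1) :
    Summable fun n : ℕ ↦ a n / (2 * n + 1) * y ^ (2 * n + 1) := by
  refine .of_norm_bounded (summable_geometric_of_lt_one (abs_nonneg y) hy) fun n ↦ ?_
  have hcoef : |a n / (2 * n + 1)| ≤ 1 := by
    rw [abs_div, abs_of_pos (by positivity : (0 : ℝ) < 2 * n + 1), div_le_one (by positivity)]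
    linarith [ha n, (n.cast_nonneg : (0 : ℝ) ≤ n)]
  rw [Real.norm_eq_abs, abs_mul, abs_pow]
  calc |a n / (2 * n + 1)| * |y| ^ (2 * n + 1) ≤ 1 * |y| ^ n :=
        mul_le_mul hcoef (pow_le_pow_of_le_one (abs_nonneg y) hy.le (by omega))
          (by positivity) zero_le_one
    _ = |y| ^ n := one_mul _

theorem hasDerivAt_tsum_div_mul_odd_pow (ha : ∀ n, |a n| ≤ 1) {y : ℝ} (hy : |y| < 1) :
    HasDerivAt (fun t ↦ ∑' n : ℕ, a n / (2 * n + 1) * t ^ (2 * n + 1))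
      (∑' n : ℕ, a n * y ^ (2 * n)) y := by
  obtain ⟨r, hyr, hr1⟩ := exists_between hy
  have hr0 : 0 < r := (abs_nonneg y).trans_lt hyr
  refine hasDerivAt_tsum_of_isPreconnected
    (g := fun n t ↦ a n / (2 * n + 1) * t ^ (2 * n + 1)) (g' := fun n t ↦ a n * t ^ (2 * n))
    (summable_geometric_of_lt_one (sq_nonneg r) (by nlinarith)) isOpen_Ioo
    (convex_Ioo (-r) r).isPreconnected (fun n z _ ↦ ?_) (fun n z hz ↦ ?_)
    (y₀ := 0) ⟨by linarith, by linarith⟩ (summable_div_mul_odd_pow ha (by simp))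
    (abs_lt.1 hyr)
  · refine ((hasDerivAt_pow (2 * n + 1) z).const_mul (a n / (2 * n + 1))).congr_deriv ?_
    rw [Nat.add_sub_cancel]
    push_cast
    field_simp
  · rw [Real.norm_eq_abs, abs_mul, abs_pow, pow_mul]
    have hz' : |z| ≤ r := (abs_lt.2 hz).le
    calc |a n| * (|z| ^ 2) ^ n ≤ 1 * (r ^ 2) ^ n := by gcongr; exact ha n
      _ = (r ^ 2) ^ n := one_mul _

end OddPowerSeries

theorem abs_centralBinom_div_four_pow_le_one (n : ℕ) : |(centralBinom n : ℝ) / 4 ^ n| ≤ 1 := by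
  rw [abs_of_nonneg (by positivity), div_le_one (by positivity)]
  exact_mod_cast centralBinom_le_four_pow n

theorem hasSum_arcsin_of_abs_lt {t : ℝ} (ht : |t| < 1) :
    HasSum (fun n : ℕ ↦ (centralBinom n : ℝ) / 4 ^ n / (2 * n + 1) * t ^ (2 * n + 1))
      (arcsin t) := by
  set F : ℝ → ℝ := fun t ↦
    ∑' n : ℕ, (centralBinom n : ℝ) / 4 ^ n / (2 * n + 1) * t ^ (2 * n + 1)
  have hF : ∀ y ∈ Ioo (-1 : ℝ) 1, HasDerivAt F (1 / √(1 - y ^ 2)) y := by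
    intro y hy
    have hy' : |y| < 1 := abs_lt.2 hy
    have hy2 : |y ^ 2| < 1 := by rw [abs_pow]; exact pow_lt_one₀ (abs_nonneg y) hy' two_ne_zero
    have hsum := hasSum_centralBinom_div_four_pow_mul_pow hy2
    simp only [← pow_mul] at hsum
    exact hsum.tsum_eq ▸ hasDerivAt_tsum_div_mul_odd_pow abs_centralBinom_div_four_pow_le_one hy'
  have harcsin : ∀ y ∈ Ioo (-1 : ℝ) 1, HasDerivAt arcsin (1 / √(1 - y ^ 2)) y :=
    fun y hy ↦ hasDerivAt_arcsin hy.1.ne' hy.2.ne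
  have hFt : F t = arcsin t := by
    refine isOpen_Ioo.eqOn_of_deriv_eq isPreconnected_Ioo
      (fun y hy ↦ (hF y hy).differentiableAt.differentiableWithinAt)
      (fun y hy ↦ (harcsin y hy).differentiableAt.differentiableWithinAt)
      (fun y hy ↦ (hF y hy).deriv.trans (harcsin y hy).deriv.symm)
      (show (0 : ℝ) ∈ Ioo (-1) 1 by norm_num) (by simp [F]) (abs_lt.1 ht)
  exact hFt ▸ (summable_div_mul_odd_pow abs_centralBinom_div_four_pow_le_one ht).hasSum

theorem hasSum_arcsin_one :
    HasSum (fun n : ℕ ↦ (centralBinom n : ℝ) / 4 ^ n / (2 * n + 1)) (π / 2) := by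
  have hunit : ∀ᶠ x in 𝓝[<] (1 : ℝ), x ∈ Ioo 0 1 := Ioo_mem_nhdsLT zero_lt_one
  refine hasSum_of_tendsto_of_nonneg_of_le (l := 𝓝[<] 1)
    (F := fun x n ↦ (centralBinom n : ℝ) / 4 ^ n / (2 * n + 1) * x ^ (2 * n + 1)) (S := arcsin)
    ?_ ?_ ?_ (fun n ↦ ?_) ?_
  · filter_upwards [hunit] with x hx n
    exact mul_nonneg (by positivity) (pow_nonneg hx.1.le _)
  · filter_upwards [hunit] with x hx n
    exact mul_le_of_le_one_right (by positivity) (pow_le_one₀ hx.1.le hx.2.le)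
  · filter_upwards [hunit] with x hx
    exact hasSum_arcsin_of_abs_lt (abs_lt.2 ⟨by linarith [hx.1], hx.2⟩)
  · have hcont : Continuous fun x : ℝ ↦
        (centralBinom n : ℝ) / 4 ^ n / (2 * n + 1) * x ^ (2 * n + 1) := by fun_prop
    simpa using (hcont.tendsto 1).mono_left nhdsWithin_le_nhds
  · simpa using (continuous_arcsin.tendsto 1).mono_left nhdsWithin_le_nhds

theorem hasSum_arcsin {t : ℝ} (ht : t ∈ Icc (-1 : ℝ) 1) :
    HasSum (fun n : ℕ ↦ (centralBinom n : ℝ) / 4 ^ n / (2 * n + 1) * t ^ (2 * n + 1))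
      (arcsin t) := by
  rcases ht.2.eq_or_lt with rfl | ht1
  · simpa using hasSum_arcsin_one
  rcases ht.1.eq_or_lt with rfl | ht2
  · simpa [Odd.neg_one_pow ⟨_, rfl⟩, neg_div] using hasSum_arcsin_one.neg
  exact hasSum_arcsin_of_abs_lt (abs_lt.2 ⟨ht2, ht1⟩)

/-- For all `t ∈ [-1,1]`,
`arccos t = π/2 - ∑_{n=0}^∞ (binom(2n,n)/(4^n (2n+1))) t^(2n+1)`, and all coefficients of the
power series `A(t) = π/2 - arccos t` are positive. -/
theorem arccos_maclaurin :
    (∀ n : ℕ, 0 < ((Nat.choose (2*n) n : ℝ) / (4^n * (2*n+1)))) ∧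
    ∀ t ∈ Set.Icc (-1 : ℝ) 1,
      HasSum (fun n : ℕ => ((Nat.choose (2*n) n : ℝ) / (4^n * (2*n+1))) * t^(2*n+1))
        (Real.pi / 2 - Real.arccos t) := by
  simp only [← centralBinom_eq_two_mul_choose, ← div_div]
  refine ⟨fun n ↦ div_pos (div_pos (mod_cast centralBinom_pos n) (by positivity)) (by positivity),
    fun t ht ↦ ?_⟩
  rw [arccos_eq_pi_div_two_sub_arcsin, sub_sub_cancel]
  exact hasSum_arcsin ht
end

section
/- Let 0 < δ < 1 and ε ∈ [0,1). Then the function F(t) = (ε + arccos t)^δ has a power series expansion F(t) = a_0 + Σ_{k≥1} a_k t^k valid for |t| < 1 in which every coefficient a_k with k ≥ 1 is strictly negative. -/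
/-!
With `c = ε + π/2` we have `ε + arccos t = c - arcsin t`, so `F` is the composite of
`u ↦ (c - u)^δ` with `arcsin`. By the binomial series the coefficients `g_m` of `(c - u)^δ` are
negative for `m ≥ 1` when `0 < δ < 1`, while `arcsin`, the antiderivative of `(1 - t²)^(-1/2)`, has
nonnegative coefficients and starts with `t`. So the coefficient `∑_{m ≤ k} g_m [t^k] arcsin^m` of
`t^k` in the composite is a sum of nonpositive terms, the one with `m = k` being `g_k < 0`. Since
`arcsin |t| < π/2 ≤ c`, the double series converges absolutely on `(-1, 1)` and may be summed in
either order.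
-/

open Real Finset

section Binomial

variable {K : Type*} [Field K] [CharZero K]

theorem Ring.choose_add_one (a : K) (n : ℕ) :
    Ring.choose a (n + 1) = Ring.choose a n * ((a - n) / (n + 1)) := by
  simp only [Ring.choose_eq_smul, descPochhammer_succ_right, Polynomial.smeval_mul,
    Polynomial.smeval_sub, Polynomial.smeval_X, Polynomial.smeval_natCast, Nat.factorial_succ,
    smul_eq_mul]
  push_cast
  field_simp
  ring

theorem neg_one_pow_mul_choose_add_one (a : K) (n : ℕ) :
    (-1) ^ (n + 1) * Ring.choose a (n + 1) =
      (-1) ^ n * Ring.choose a n * ((n - a) / (n + 1)) := by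
  rw [Ring.choose_add_one]
  ring

end Binomial

section OrderedBinomial

variable {K : Type*} [Field K] [LinearOrder K] [IsStrictOrderedRing K]

theorem neg_one_pow_mul_choose_nonneg {a : K} (ha : a ≤ 0) (n : ℕ) :
    0 ≤ (-1) ^ n * Ring.choose a n := by
  induction n with
  | zero => simp
  | succ n ih =>
    rw [neg_one_pow_mul_choose_add_one]
    have : 0 ≤ (n : K) := n.cast_nonneg
    exact mul_nonneg ih (div_nonneg (by linarith) (by positivity))

theorem neg_one_pow_mul_choose_neg {a : K} (ha₀ : 0 < a) (ha₁ : a < 1) {n : ℕ} (hn : n ≠ 0) :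
    (-1) ^ n * Ring.choose a n < 0 := by
  induction n with
  | zero => exact absurd rfl hn
  | succ n ih =>
    rw [neg_one_pow_mul_choose_add_one]
    rcases Nat.eq_zero_or_pos n with rfl | hn
    · simpa using ha₀
    · have : (1 : K) ≤ n := by exact_mod_cast hn
      exact mul_neg_of_neg_of_pos (ih hn.ne') (div_pos (by linarith) (by positivity))

end OrderedBinomial

theorem Real.hasSum_choose_mul_pow (a : ℝ) {x : ℝ} (hx : |x| < 1) :
    HasSum (fun n ↦ Ring.choose a n * x ^ n) ((1 + x) ^ a) := by
  have := one_add_rpow_hasFPowerSeriesOnBall_zero (a := a) |>.hasSum (y := x)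
    (by simpa [enorm_eq_nnnorm, ← NNReal.coe_lt_one] using hx)
  simpa [binomialSeries, FormalMultilinearSeries.ofScalars_apply_eq, mul_comm] using this

theorem Real.hasSum_sub_rpow (a : ℝ) {c u : ℝ} (hc : 0 < c) (hu : |u| < c) :
    HasSum (fun n ↦ c ^ a * ((-1) ^ n * Ring.choose a n) / c ^ n * u ^ n) ((c - u) ^ a) := by
  have hx : |-u / c| < 1 := by rwa [abs_div, abs_neg, abs_of_pos hc, div_lt_one hc]
  have hcu : 0 ≤ 1 + -u / c := by linarith [(abs_lt.1 hx).1]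
  have key := (hasSum_choose_mul_pow a hx).mul_left (c ^ a)
  rw [← mul_rpow hc.le hcu, show c * (1 + -u / c) = c - u by field_simp; ring] at key
  have hterm (n : ℕ) : c ^ a * (Ring.choose a n * (-u / c) ^ n) =
      c ^ a * ((-1) ^ n * Ring.choose a n) / c ^ n * u ^ n := by
    rw [neg_div, neg_pow, div_pow]
    field_simp
  simpa only [hterm] using key

theorem summable_abs_mul_mul_pow_sub_one {a : ℕ → ℝ} {r : ℝ} (hr : 0 ≤ r)
    (ha : Summable fun n ↦ (n + 1) * a (n + 1) * r ^ n) :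
    Summable fun n ↦ |a n| * (n * r ^ (n - 1)) := by
  rw [← summable_nat_add_iff 1]
  refine ha.abs.congr fun n ↦ ?_
  rw [abs_mul, abs_mul, abs_pow, abs_of_nonneg hr, Nat.add_sub_cancel, Nat.cast_succ,
    abs_of_nonneg (by positivity : (0 : ℝ) ≤ n + 1)]
  ring

theorem summable_and_hasDerivAt_tsum_mul_pow {a : ℕ → ℝ} {g : ℝ → ℝ}
    (ha : ∀ x, |x| < 1 → HasSum (fun n ↦ (n + 1) * a (n + 1) * x ^ n) (g x))
    {y : ℝ} (hy : |y| < 1) :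
    Summable (fun n ↦ a n * y ^ n) ∧ HasDerivAt (fun x ↦ ∑' n, a n * x ^ n) (g y) y := by
  obtain ⟨r, hyr, hr⟩ := exists_between hy
  have hr₀ : 0 < r := (abs_nonneg y).trans_lt hyr
  have hu := summable_abs_mul_mul_pow_sub_one hr₀.le (ha r (by rwa [abs_of_pos hr₀])).summable
  have hderiv (n : ℕ) (z : ℝ) :
      HasDerivAt (fun z ↦ a n * z ^ n) (a n * (n * z ^ (n - 1))) z :=
    (hasDerivAt_pow n z).const_mul (a n)
  have hbound (n : ℕ) (z : ℝ) (hz : z ∈ Metric.ball (0 : ℝ) r) :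
      ‖a n * (n * z ^ (n - 1))‖ ≤ |a n| * (n * r ^ (n - 1)) := by
    rw [Metric.mem_ball, dist_zero_right] at hz
    rw [norm_mul, norm_mul, norm_pow, Real.norm_natCast, norm_eq_abs]
    gcongr
  have h0 : Summable (fun n ↦ a n * (0 : ℝ) ^ n) :=
    summable_of_ne_finset_zero (s := {0}) fun n hn ↦ by
      rw [Finset.mem_singleton] at hn; simp [hn]
  have hball := (convex_ball (0 : ℝ) r).isPreconnected
  have h0_mem := Metric.mem_ball_self (x := (0 : ℝ)) hr₀
  have hy_mem : y ∈ Metric.ball (0 : ℝ) r := by rwa [Metric.mem_ball, dist_zero_right]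
  refine ⟨summable_of_summable_hasDerivAt_of_isPreconnected (g := fun n z ↦ a n * z ^ n)
    hu Metric.isOpen_ball hball (fun n z _ ↦ hderiv n z) hbound h0_mem h0 hy_mem, ?_⟩
  have hseries : HasSum (fun n ↦ a n * (n * y ^ (n - 1))) (g y) := by
    rw [← hasSum_nat_add_iff' 1]
    simpa [mul_comm, mul_left_comm] using ha y hy
  exact (hasDerivAt_tsum_of_isPreconnected (g := fun n z ↦ a n * z ^ n) hu Metric.isOpen_ball
    hball (fun n z _ ↦ hderiv n z) hbound h0_mem h0 hy_mem).congr_deriv hseries.tsum_eq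

theorem hasSum_mul_pow_of_hasDerivAt {f f' : ℝ → ℝ} {a : ℕ → ℝ}
    (hf : ∀ x, |x| < 1 → HasDerivAt f (f' x) x)
    (hf' : ∀ x, |x| < 1 → HasSum (fun n ↦ (n + 1) * a (n + 1) * x ^ n) (f' x))
    (h₀ : a 0 = f 0) {x : ℝ} (hx : |x| < 1) :
    HasSum (fun n ↦ a n * x ^ n) (f x) := by
  set S : ℝ → ℝ := fun y ↦ ∑' n, a n * y ^ n
  have hS {y : ℝ} (hy : |y| < 1) := summable_and_hasDerivAt_tsum_mul_pow hf' hy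
  have hball {y : ℝ} : y ∈ Metric.ball (0 : ℝ) 1 ↔ |y| < 1 := by
    rw [Metric.mem_ball, dist_zero_right, norm_eq_abs]
  have hdiff {y : ℝ} (hy : y ∈ Metric.ball (0 : ℝ) 1) : HasDerivAt (S - f) 0 y := by
    simpa using (hS (hball.1 hy)).2.sub (hf y (hball.1 hy))
  have hconst : (S - f) x = (S - f) 0 :=
    Metric.isOpen_ball.is_const_of_deriv_eq_zero (convex_ball (0 : ℝ) 1).isPreconnected
      (fun y hy ↦ (hdiff hy).differentiableAt.differentiableWithinAt)
      (fun y hy ↦ (hdiff hy).deriv) (hball.2 hx) (hball.2 (by simp))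
  have hS₀ : S 0 = a 0 := by
    simp only [S]
    rw [tsum_eq_single 0 fun n hn ↦ by simp [hn]]
    simp
  rw [Pi.sub_apply, Pi.sub_apply, hS₀, h₀, sub_self, sub_eq_zero] at hconst
  exact hconst ▸ (hS hx).1.hasSum

open PowerSeries

noncomputable def arcsinSeries : ℝ⟦X⟧ :=
  mk fun n ↦ if Even n then 0 else (-1) ^ (n / 2) * Ring.choose (-1 / 2 : ℝ) (n / 2) / n

theorem constantCoeff_arcsinSeries : constantCoeff arcsinSeries = 0 := by
  simp [arcsinSeries, ← coeff_zero_eq_constantCoeff_apply]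

theorem coeff_one_arcsinSeries : coeff 1 arcsinSeries = 1 := by
  simp [arcsinSeries]

theorem coeff_arcsinSeries_nonneg (n : ℕ) : 0 ≤ coeff n arcsinSeries := by
  rw [arcsinSeries, coeff_mk]
  split_ifs
  · rfl
  · exact div_nonneg (neg_one_pow_mul_choose_nonneg (by norm_num) _) n.cast_nonneg

theorem hasSum_coeff_succ_arcsinSeries {x : ℝ} (hx : |x| < 1) :
    HasSum (fun n ↦ (n + 1) * coeff (n + 1) arcsinSeries * x ^ n) (1 / √(1 - x ^ 2)) := by
  have hx2 : |-x ^ 2| < 1 := by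
    rwa [abs_neg, abs_pow, sq_lt_one_iff_abs_lt_one, abs_abs]
  have h := hasSum_choose_mul_pow (-1 / 2) hx2
  have hpos : 0 ≤ 1 - x ^ 2 := by nlinarith [abs_lt.1 hx, sq_abs x]
  have hval : (1 + -x ^ 2) ^ (-1 / 2 : ℝ) = 1 / √(1 - x ^ 2) := by
    rw [← sub_eq_add_neg, neg_div, rpow_neg hpos, ← sqrt_eq_rpow, one_div]
  rw [hval] at h
  have hdouble : Function.Injective (fun m : ℕ ↦ 2 * m) := fun _ _ h ↦ by simpa using h
  rw [← hdouble.hasSum_iff]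
  · have hterm (m : ℕ) : Ring.choose (-1 / 2 : ℝ) m * (-x ^ 2) ^ m =
        (((2 * m : ℕ) : ℝ) + 1) * coeff (2 * m + 1) arcsinSeries * x ^ (2 * m) := by
      have hodd : ¬Even (2 * m + 1) := by simp
      simp only [arcsinSeries, coeff_mk, hodd, if_false, show (2 * m + 1) / 2 = m by omega]
      rw [neg_pow, pow_mul]
      push_cast
      field_simp
    simpa only [hterm, Function.comp_def] using h
  · intro n hn
    have hodd : ¬Even n := fun ⟨m, hm⟩ ↦ hn ⟨m, by simp only; omega⟩
    have heven : Even (n + 1) := by simpa [Nat.even_add_one] using hodd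
    simp [arcsinSeries, heven]

theorem hasSum_arcsinSeries {x : ℝ} (hx : |x| < 1) :
    HasSum (fun n ↦ coeff n arcsinSeries * x ^ n) (arcsin x) :=
  hasSum_mul_pow_of_hasDerivAt (a := fun n ↦ coeff n arcsinSeries)
    (fun _ hy ↦ hasDerivAt_arcsin (abs_lt.1 hy).1.ne' (abs_lt.1 hy).2.ne)
    (fun _ hy ↦ hasSum_coeff_succ_arcsinSeries hy)
    (by simp [arcsinSeries]) hx

namespace PowerSeries

section Evaluation

variable {R : Type*} [NormedCommRing R] {φ ψ : R⟦X⟧} {t : R}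

theorem coeff_mul_mul_pow (φ ψ : R⟦X⟧) (t : R) (n : ℕ) :
    coeff n (φ * ψ) * t ^ n =
      ∑ p ∈ antidiagonal n, (coeff p.1 φ * t ^ p.1) * (coeff p.2 ψ * t ^ p.2) := by
  rw [coeff_mul, sum_mul]
  refine sum_congr rfl fun p hp ↦ ?_
  rw [← mem_antidiagonal.1 hp, pow_add]
  ring

theorem summable_norm_coeff_mul_mul_pow
    (hφ : Summable fun n ↦ ‖coeff n φ * t ^ n‖) (hψ : Summable fun n ↦ ‖coeff n ψ * t ^ n‖) :
    Summable fun n ↦ ‖coeff n (φ * ψ) * t ^ n‖ := by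
  simpa only [coeff_mul_mul_pow] using summable_norm_sum_mul_antidiagonal_of_summable_norm hφ hψ

theorem hasSum_coeff_mul_mul_pow [CompleteSpace R]
    (hφ : Summable fun n ↦ ‖coeff n φ * t ^ n‖) (hψ : Summable fun n ↦ ‖coeff n ψ * t ^ n‖) :
    HasSum (fun n ↦ coeff n (φ * ψ) * t ^ n)
      ((∑' n, coeff n φ * t ^ n) * ∑' n, coeff n ψ * t ^ n) := by
  rw [tsum_mul_tsum_eq_tsum_sum_antidiagonal_of_summable_norm hφ hψ]
  simpa only [coeff_mul_mul_pow] using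
    (summable_norm_coeff_mul_mul_pow hφ hψ).of_norm.hasSum

theorem summable_norm_coeff_pow_mul_pow (hφ : Summable fun n ↦ ‖coeff n φ * t ^ n‖)
    (k : ℕ) : Summable fun n ↦ ‖coeff n (φ ^ k) * t ^ n‖ := by
  induction k with
  | zero =>
    refine summable_of_ne_finset_zero (s := {0}) fun n hn ↦ ?_
    simp [coeff_one, Finset.mem_singleton.not.1 hn]
  | succ k ih => simpa only [pow_succ] using summable_norm_coeff_mul_mul_pow ih hφ

theorem hasSum_coeff_pow_mul_pow [CompleteSpace R]
    (hφ : Summable fun n ↦ ‖coeff n φ * t ^ n‖) (k : ℕ) :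
    HasSum (fun n ↦ coeff n (φ ^ k) * t ^ n) ((∑' n, coeff n φ * t ^ n) ^ k) := by
  induction k with
  | zero =>
    have h : (fun n ↦ coeff n ((φ ^ 0 : R⟦X⟧)) * t ^ n) = fun n ↦ if n = 0 then 1 else 0 := by
      ext n; split_ifs with hn <;> simp [coeff_one, hn]
    rw [h, pow_zero]
    exact hasSum_ite_eq 0 1
  | succ k ih =>
    rw [pow_succ, pow_succ, ← ih.tsum_eq]
    exact hasSum_coeff_mul_mul_pow (summable_norm_coeff_pow_mul_pow hφ k) hφ

end Evaluation

theorem coeff_pow_nonneg {R : Type*} [CommSemiring R] [PartialOrder R]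
    [IsOrderedRing R] {φ : R⟦X⟧} (hφ : ∀ n, 0 ≤ coeff n φ) (k n : ℕ) :
    0 ≤ coeff n (φ ^ k) := by
  induction k generalizing n with
  | zero => rw [pow_zero, coeff_one]; split_ifs <;> simp
  | succ k ih =>
    rw [pow_succ, coeff_mul]
    exact sum_nonneg fun p _ ↦ mul_nonneg (ih _) (hφ _)

theorem coeff_pow_of_lt {R : Type*} [CommSemiring R] {φ : R⟦X⟧}
    (hφ : constantCoeff φ = 0) {k n : ℕ} (h : n < k) : coeff n (φ ^ k) = 0 :=
  coeff_of_lt_order n ((Nat.cast_lt.2 h).trans_le (le_order_pow_of_constantCoeff_eq_zero k hφ))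

theorem coeff_self_pow {R : Type*} [CommSemiring R] {φ : R⟦X⟧}
    (hφ : constantCoeff φ = 0) (k : ℕ) : coeff k (φ ^ k) = coeff 1 φ ^ k := by
  obtain ⟨ψ, rfl⟩ := X_dvd_iff.2 hφ
  have h := coeff_X_pow_mul (ψ ^ k) k 0
  rw [zero_add] at h
  rw [mul_pow, h, coeff_zero_eq_constantCoeff_apply, map_pow, coeff_succ_X_mul,
    coeff_zero_eq_constantCoeff_apply]

theorem coeff_subst_eq_sum {R : Type*} [CommRing R] {φ : R⟦X⟧}
    (hφ : constantCoeff φ = 0) (g : R⟦X⟧) (k : ℕ) :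
    coeff k (g.subst φ) = ∑ m ∈ range (k + 1), coeff m g * coeff k (φ ^ m) := by
  rw [coeff_subst' (HasSubst.of_constantCoeff_zero' hφ)]
  refine (finsum_eq_sum_of_support_subset _ fun m hm ↦ ?_).trans
    (sum_congr rfl fun _ _ ↦ smul_eq_mul ..)
  by_contra hmk
  simp only [coe_range, Set.mem_Iio, not_lt] at hmk
  exact hm (by simp [coeff_pow_of_lt hφ (show k < m by omega)])

theorem coeff_subst_neg {g φ : ℝ⟦X⟧} (hg : ∀ m, m ≠ 0 → coeff m g < 0)
    (hφ₀ : constantCoeff φ = 0) (hφ : ∀ n, 0 ≤ coeff n φ) (hφ₁ : 0 < coeff 1 φ) {k : ℕ}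
    (hk : k ≠ 0) : coeff k (g.subst φ) < 0 := by
  rw [coeff_subst_eq_sum hφ₀]
  refine sum_neg' (fun m _ ↦ ?_) ⟨k, self_mem_range_succ k, ?_⟩
  · rcases eq_or_ne m 0 with rfl | hm
    · simp [coeff_one, hk]
    · exact mul_nonpos_of_nonpos_of_nonneg (hg m hm).le (coeff_pow_nonneg hφ m k)
  · rw [coeff_self_pow hφ₀]
    exact mul_neg_of_neg_of_pos (hg k hk) (pow_pos hφ₁ k)

theorem hasSum_coeff_subst_mul_pow {g φ : ℝ⟦X⟧} (hφ₀ : constantCoeff φ = 0)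
    (hφ : ∀ n, 0 ≤ coeff n φ) {t u v w : ℝ}
    (hu : HasSum (fun n ↦ coeff n φ * t ^ n) u) (hv : HasSum (fun n ↦ coeff n φ * |t| ^ n) v)
    (hgu : HasSum (fun m ↦ coeff m g * u ^ m) w) (hgv : Summable fun m ↦ coeff m g * v ^ m) :
    HasSum (fun k ↦ coeff k (g.subst φ) * t ^ k) w := by
  have hnorm (s : ℝ) (hs : |s| = |t|) : Summable fun n ↦ ‖coeff n φ * s ^ n‖ := by
    refine hv.summable.congr fun n ↦ ?_
    rw [norm_mul, norm_pow, norm_eq_abs, norm_eq_abs, hs, abs_of_nonneg (hφ n)]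
  have hpow (m : ℕ) : HasSum (fun k ↦ coeff k (φ ^ m) * t ^ k) (u ^ m) :=
    hu.tsum_eq ▸ hasSum_coeff_pow_mul_pow (hnorm t rfl) m
  have hpow_abs (m : ℕ) : HasSum (fun k ↦ coeff k (φ ^ m) * |t| ^ k) (v ^ m) :=
    hv.tsum_eq ▸ hasSum_coeff_pow_mul_pow (hnorm |t| (abs_abs t)) m
  set F : ℕ × ℕ → ℝ := fun p ↦ coeff p.1 g * (coeff p.2 (φ ^ p.1) * t ^ p.2)
  have hF_norm (m : ℕ) : HasSum (fun k ↦ ‖F (m, k)‖) (|coeff m g * v ^ m|) := by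
    have hv₀ : 0 ≤ v := hv.nonneg fun n ↦ mul_nonneg (hφ n) (by positivity)
    rw [abs_mul, abs_of_nonneg (pow_nonneg hv₀ m)]
    refine ((hpow_abs m).mul_left |coeff m g|).congr_fun fun k ↦ ?_
    simp only [F, norm_mul, norm_pow, norm_eq_abs, abs_of_nonneg (coeff_pow_nonneg hφ m k)]
  have hF : Summable F := by
    refine Summable.of_norm ((summable_prod_of_nonneg fun _ ↦ norm_nonneg _).2
      ⟨fun m ↦ (hF_norm m).summable, ?_⟩)
    simpa only [(hF_norm _).tsum_eq] using hgv.abs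
  have hFw : HasSum F w := by
    convert hF.hasSum
    exact hgu.unique (hF.hasSum.prod_fiberwise fun m ↦ (hpow m).mul_left (coeff m g))
  refine (Equiv.prodComm ℕ ℕ).hasSum_iff.2 hFw |>.prod_fiberwise fun k ↦ ?_
  rw [coeff_subst_eq_sum hφ₀, sum_mul]
  refine (hasSum_sum_of_ne_finset_zero fun m hm ↦ ?_).congr_fun fun m ↦ ?_
  · simp [coeff_pow_of_lt hφ₀ (not_lt.1 (mem_range.not.1 hm) |> Nat.lt_of_succ_le)]
  · simp only [F, Function.comp_apply, Equiv.prodComm_apply, Prod.swap_prod_mk]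
    ring

end PowerSeries

/-- For `0 < δ < 1` and `ε ∈ [0,1)`, the function `F(t) = (ε + arccos t)^δ`
has a power series expansion on `(-1,1)` whose coefficients `a_k`, `k ≥ 1`, are all
strictly negative. -/
theorem geodesic_pos_power_neg_coeffs (δ ε : ℝ) (hδ0 : 0 < δ) (hδ1 : δ < 1)
    (hε : ε ∈ Set.Ico (0 : ℝ) 1) :
    ∃ a : ℕ → ℝ, (∀ k : ℕ, 1 ≤ k → a k < 0) ∧
      ∀ t : ℝ, |t| < 1 →
        HasSum (fun k : ℕ => a k * t ^ k) ((ε + Real.arccos t) ^ δ) := by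
  have hc : π / 2 ≤ ε + π / 2 := by linarith [hε.1]
  have hc₀ : 0 < ε + π / 2 := by linarith [pi_pos]
  set c := ε + π / 2
  have harcsin {x : ℝ} (hx : |x| < 1) : |arcsin x| < c :=
    (abs_lt.2 ⟨neg_pi_div_two_lt_arcsin.2 (abs_lt.1 hx).1,
      arcsin_lt_pi_div_two.2 (abs_lt.1 hx).2⟩).trans_le hc
  let g : ℝ⟦X⟧ := mk fun n ↦ c ^ δ * ((-1) ^ n * Ring.choose δ n) / c ^ n
  have hg (u : ℝ) (hu : |u| < c) : HasSum (fun n ↦ coeff n g * u ^ n) ((c - u) ^ δ) := by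
    simpa [g] using hasSum_sub_rpow δ hc₀ hu
  refine ⟨fun k ↦ coeff k (g.subst arcsinSeries), fun k hk ↦ ?_, fun t ht ↦ ?_⟩
  · refine coeff_subst_neg (fun m hm ↦ ?_) constantCoeff_arcsinSeries coeff_arcsinSeries_nonneg
      (by rw [coeff_one_arcsinSeries]; exact one_pos) (by omega)
    rw [coeff_mk]
    exact div_neg_of_neg_of_pos (mul_neg_of_pos_of_neg (by positivity)
      (neg_one_pow_mul_choose_neg hδ0 hδ1 hm)) (by positivity)
  · have ht' : |(|t|)| < 1 := by rwa [abs_abs]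
    have := hasSum_coeff_subst_mul_pow constantCoeff_arcsinSeries coeff_arcsinSeries_nonneg
      (hasSum_arcsinSeries ht) (hasSum_arcsinSeries ht') (hg _ (harcsin ht))
      (hg _ (harcsin ht')).summable
    rwa [arccos_eq_pi_div_two_sub_arcsin, ← add_sub_assoc]
end

section
/- Let λ > 0 and -(2λ+1) < δ ≤ 0, with the convention that for δ = 0 the potential is F_0(t) = log(π/arccos t). Then for every integer n ≥ 0, ∫_{-1}^1 F_δ(t) C_n^λ(t) (1-t^2)^{λ-1/2} dt > 0, where F_δ(t) = (arccos t)^δ for δ ≠ 0. -/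
/-- Gegenbauer polynomials via the standard three-term recurrence. -/
noncomputable def gegenbauer (l : ℝ) : ℕ → Polynomial ℝ
  | 0 => 1
  | 1 => Polynomial.C (2 * l) * Polynomial.X
  | (n + 2) =>
      Polynomial.C ((2 * ((n : ℝ) + 1 + l)) / ((n : ℝ) + 2)) * Polynomial.X *
          gegenbauer l (n + 1) -
        Polynomial.C (((n : ℝ) + 2 * l) / ((n : ℝ) + 2)) * gegenbauer l n

/-!
Write `M(δ, σ, P) = ∫_{-1}^1 F_δ(t) P(t) (1 - t²)^σ dt`. Since `F_δ' = c_δ F_{δ-1} (1 - t²)^(-1/2)`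
with `c_δ > 0`, integrating the derivative of `F_δ (1 - t²)^σ P` (which vanishes at `±1` when
`δ / 2 + σ > 0`) gives `c_δ M(δ - 1, σ - 1/2, P) + M(δ, σ - 1, (1 - t²) P' - 2σ t P) = 0`.

For `P = C_n^{λ+1}` and `σ = λ + 1/2` the second polynomial is a negative multiple of
`C_{n+1}^λ`, so `M(δ, λ - 1/2, C_{n+1}^λ)` is a positive multiple of `M(δ - 1, λ, C_n^{λ+1})`.
For `P = C_{m+1}^p` and `σ = p` it is a combination of `C_m^p` and `-C_{m+2}^p`, so
`M(γ, p - 1, C_{m+2}^p)` is a positive combination of `M(γ - 1, p - 1/2, C_{m+1}^p)` and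
`M(γ, p - 1, C_m^p)`. Both families of moments are therefore positive by a joint induction on the
degree, starting from `C_0 = 1`.
-/

open Polynomial

section GegenbauerIdentities

variable (l t : ℝ)

@[simp] lemma eval_gegenbauer_zero : (gegenbauer l 0).eval t = 1 := by simp [gegenbauer]

@[simp] lemma eval_gegenbauer_one : (gegenbauer l 1).eval t = 2 * l * t := by simp [gegenbauer]

@[simp] lemma eval_derivative_gegenbauer_zero : (derivative (gegenbauer l 0)).eval t = 0 := by
  simp [gegenbauer]

@[simp] lemma eval_derivative_gegenbauer_one : (derivative (gegenbauer l 1)).eval t = 2 * l := by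
  simp [gegenbauer]

lemma eval_gegenbauer_add_two (n : ℕ) :
    ((n : ℝ) + 2) * (gegenbauer l (n + 2)).eval t =
      2 * ((n : ℝ) + 1 + l) * t * (gegenbauer l (n + 1)).eval t
        - ((n : ℝ) + 2 * l) * (gegenbauer l n).eval t := by
  simp only [gegenbauer, eval_sub, eval_mul, eval_C, eval_X]
  field_simp

lemma eval_derivative_gegenbauer_add_two (n : ℕ) :
    ((n : ℝ) + 2) * (derivative (gegenbauer l (n + 2))).eval t =
      2 * ((n : ℝ) + 1 + l) *
          ((gegenbauer l (n + 1)).eval t + t * (derivative (gegenbauer l (n + 1))).eval t)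
        - ((n : ℝ) + 2 * l) * (derivative (gegenbauer l n)).eval t := by
  simp only [gegenbauer, derivative_sub, derivative_mul, derivative_C, derivative_X, eval_sub,
    eval_add, eval_mul, eval_C, eval_X, zero_mul, zero_add, mul_one]
  field_simp

lemma one_sub_sq_mul_eval_derivative_gegenbauer (n : ℕ) :
    (1 - t ^ 2) * (derivative (gegenbauer l n)).eval t =
      ((n : ℝ) + 2 * l) * t * (gegenbauer l n).eval t
        - ((n : ℝ) + 1) * (gegenbauer l (n + 1)).eval t := by
  induction n using Nat.twoStepInduction with
  | zero => simp
  | one =>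
    have h2 := eval_gegenbauer_add_two l t 0
    simp only [Nat.reduceAdd, eval_gegenbauer_zero, eval_gegenbauer_one,
      eval_derivative_gegenbauer_one] at h2 ⊢
    push_cast at h2 ⊢
    linear_combination h2
  | more n ih0 ih1 =>
    have hn : ((n : ℝ) + 2) ≠ 0 := by positivity
    have hC := eval_gegenbauer_add_two l t n
    have hC' := eval_gegenbauer_add_two l t (n + 1)
    have hD := eval_derivative_gegenbauer_add_two l t n
    push_cast at ih1 hC' ⊢
    refine mul_left_cancel₀ hn ?_
    linear_combination (1 - t ^ 2) * hD + (2 * ((n : ℝ) + 1 + l) * t) * ih1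
      - ((n : ℝ) + 2 * l) * ih0 + ((n : ℝ) + 2) * hC' - (((n : ℝ) + 2 * l) * t) * hC

/-- The two relations are proved together: the induction step of each uses the other. -/
lemma eval_gegenbauer_add_one_param (n : ℕ) :
    2 * l * ((gegenbauer (l + 1) (n + 1)).eval t - t * (gegenbauer (l + 1) n).eval t) =
        ((n : ℝ) + 2 * l + 1) * (gegenbauer l (n + 1)).eval t ∧
      ((n : ℝ) + 2) * (gegenbauer l (n + 2)).eval t =
        2 * l * (t * (gegenbauer (l + 1) (n + 1)).eval t - (gegenbauer (l + 1) n).eval t) := by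
  induction n using Nat.twoStepInduction with
  | zero =>
    have h2 := eval_gegenbauer_add_two l t 0
    simp only [Nat.reduceAdd, eval_gegenbauer_zero, eval_gegenbauer_one] at h2 ⊢
    push_cast at h2 ⊢
    constructor
    · ring
    · linear_combination h2
  | one =>
    have hC2 := eval_gegenbauer_add_two l t 0
    have hU2 := eval_gegenbauer_add_two (l + 1) t 0
    have hC3 := eval_gegenbauer_add_two l t 1
    simp only [Nat.reduceAdd, eval_gegenbauer_zero, eval_gegenbauer_one] at hC2 hU2 hC3 ⊢
    push_cast at hC2 hU2 hC3 ⊢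
    constructor
    · linear_combination l * hU2 - (l + 1) * hC2
    · linear_combination hC3 + (2 + l) * t * hC2 - l * t * hU2
  | more n ih0 ih1 =>
    have hn : ((n : ℝ) + 3) ≠ 0 := by positivity
    obtain ⟨hP0, hQ0⟩ := ih0
    obtain ⟨hP1, hQ1⟩ := ih1
    have hU1 := eval_gegenbauer_add_two (l + 1) t (n + 1)
    have hC1 := eval_gegenbauer_add_two l t (n + 1)
    have hC2 := eval_gegenbauer_add_two l t (n + 2)
    push_cast at hP1 hQ1 hU1 hC1 hC2 ⊢
    constructor
    · refine mul_left_cancel₀ hn ?_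
      linear_combination 2 * l * hU1 - ((n : ℝ) + 2 * l + 3) * hC1
        + ((n : ℝ) + 2 * l + 3) * t * hP1 - ((n : ℝ) + 2 * l + 3) * t * hQ0
        - ((n : ℝ) + 2 * l + 3) * hP0
    · refine mul_left_cancel₀ hn ?_
      linear_combination ((n : ℝ) + 3) * hC2 - 2 * l * t * hU1 + 2 * ((n : ℝ) + 3 + l) * t * hC1
        + (((n : ℝ) + 3) - 2 * ((n : ℝ) + 3 + l) * t ^ 2) * hP1
        + 2 * ((n : ℝ) + 3 + l) * t ^ 2 * hQ0 + 2 * ((n : ℝ) + 3 + l) * t * hP0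

end GegenbauerIdentities

/-- `(1 - t ^ 2) ^ (σ - 1) * (weightedDerivative σ P).eval t` is the derivative of
`(1 - t ^ 2) ^ σ * P.eval t`. -/
noncomputable def weightedDerivative (σ : ℝ) (P : ℝ[X]) : ℝ[X] :=
  (1 - X ^ 2) * derivative P - C (2 * σ) * X * P

lemma eval_weightedDerivative (σ t : ℝ) (P : ℝ[X]) :
    (weightedDerivative σ P).eval t =
      (1 - t ^ 2) * (derivative P).eval t - 2 * σ * t * P.eval t := by
  simp [weightedDerivative]

section GegenbauerWeightedDerivative

variable (l : ℝ)

lemma C_mul_weightedDerivative_gegenbauer_add_one_param (n : ℕ) :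
    C (2 * l) * weightedDerivative (l + 1 / 2) (gegenbauer (l + 1) n) =
      C (-(((n : ℝ) + 1) * ((n : ℝ) + 2 * l + 1))) * gegenbauer l (n + 1) := by
  refine Polynomial.funext fun t => ?_
  have hD := one_sub_sq_mul_eval_derivative_gegenbauer (l + 1) t n
  have hP := (eval_gegenbauer_add_one_param l t n).1
  simp only [eval_mul, eval_C, eval_weightedDerivative]
  linear_combination 2 * l * hD - ((n : ℝ) + 1) * hP

lemma weightedDerivative_gegenbauer_zero :
    weightedDerivative l (gegenbauer l 0) = -gegenbauer l 1 := by
  refine Polynomial.funext fun t => ?_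
  simp only [eval_weightedDerivative, eval_neg, eval_gegenbauer_zero, eval_gegenbauer_one,
    eval_derivative_gegenbauer_zero]
  ring

lemma C_mul_weightedDerivative_gegenbauer_succ (j : ℕ) :
    C (2 * ((j : ℝ) + 1 + l)) * weightedDerivative l (gegenbauer l (j + 1)) =
      C (((j : ℝ) + 1) * ((j : ℝ) + 2 * l)) * gegenbauer l j
        - C (((j : ℝ) + 2) * ((j : ℝ) + 1 + 2 * l)) * gegenbauer l (j + 2) := by
  refine Polynomial.funext fun t => ?_
  have hD := one_sub_sq_mul_eval_derivative_gegenbauer l t (j + 1)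
  have hC := eval_gegenbauer_add_two l t j
  simp only [eval_mul, eval_sub, eval_C, eval_weightedDerivative]
  push_cast at hD
  linear_combination 2 * ((j : ℝ) + 1 + l) * hD - ((j : ℝ) + 1) * hC

end GegenbauerWeightedDerivative

open Real Set Filter Topology MeasureTheory intervalIntegral

/-- The potential `F_δ`. -/
noncomputable def arccosPotential (δ t : ℝ) : ℝ :=
  if δ = 0 then log (π / arccos t) else arccos t ^ δ

section ArccosPotential

variable {δ t : ℝ}

lemma one_sub_sq_pos_of_mem_Ioo (ht : t ∈ Ioo (-1 : ℝ) 1) : 0 < 1 - t ^ 2 := by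
  obtain ⟨h₁, h₂⟩ := ht
  nlinarith

lemma sqrt_one_sub_sq_le_arccos : √(1 - t ^ 2) ≤ arccos t := by
  rw [← sin_arccos]
  exact sin_le (arccos_nonneg t)

lemma arccos_rpow_le_one_sub_sq_rpow (ht : t ∈ Ioo (-1 : ℝ) 1) (hδ : δ ≤ 0) :
    arccos t ^ δ ≤ (1 - t ^ 2) ^ (δ / 2) := by
  have h₀ := one_sub_sq_pos_of_mem_Ioo ht
  rw [show δ / 2 = 1 / 2 * δ by ring, rpow_mul h₀.le, ← sqrt_eq_rpow]
  exact rpow_le_rpow_of_nonpos (sqrt_pos.2 h₀) sqrt_one_sub_sq_le_arccos hδ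

lemma arccosPotential_pos (ht : t ∈ Ioo (-1 : ℝ) 1) : 0 < arccosPotential δ t := by
  have ha := arccos_pos.2 ht.2
  unfold arccosPotential
  split_ifs
  · exact log_pos ((one_lt_div ha).2 (arccos_lt_pi.2 ht.1))
  · exact rpow_pos_of_pos ha δ

lemma exists_arccosPotential_le {e : ℝ} (hδ : δ ≤ 0) (he : e < δ / 2) :
    ∃ C, ∀ t ∈ Ioo (-1 : ℝ) 1, arccosPotential δ t ≤ C * (1 - t ^ 2) ^ e := by
  rcases hδ.lt_or_eq with hδ | rfl
  · refine ⟨1, fun t ht => ?_⟩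
    rw [arccosPotential, if_neg hδ.ne, one_mul]
    have h₀ := one_sub_sq_pos_of_mem_Ioo ht
    exact (arccos_rpow_le_one_sub_sq_rpow ht hδ.le).trans <|
      rpow_le_rpow_of_exponent_ge h₀ (by nlinarith) he.le
  · -- `log x ≤ x ^ s / s` trades the logarithm for an arbitrarily small power of `1 / arccos t`.
    have hs : 0 < -2 * e := by linarith
    refine ⟨π ^ (-2 * e) / (-2 * e), fun t ht => ?_⟩
    have ha := arccos_pos.2 ht.2
    have hpow : arccos t ^ (2 * e) ≤ (1 - t ^ 2) ^ e := by
      simpa using arccos_rpow_le_one_sub_sq_rpow ht (by linarith : 2 * e ≤ 0)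
    calc arccosPotential 0 t = log (π / arccos t) := if_pos rfl
      _ ≤ (π / arccos t) ^ (-2 * e) / (-2 * e) := log_le_rpow_div (by positivity) hs
      _ = π ^ (-2 * e) / (-2 * e) * arccos t ^ (2 * e) := by
        rw [div_rpow pi_pos.le ha.le, show 2 * e = -(-2 * e) by ring, rpow_neg ha.le]
        ring
      _ ≤ π ^ (-2 * e) / (-2 * e) * (1 - t ^ 2) ^ e := by gcongr

lemma continuousOn_arccosPotential : ContinuousOn (arccosPotential δ) (Ioo (-1) 1) := by
  have ha : ∀ t ∈ Ioo (-1 : ℝ) 1, arccos t ≠ 0 := fun t ht => (arccos_pos.2 ht.2).ne'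
  unfold arccosPotential
  split_ifs
  · exact (continuousOn_const.div continuous_arccos.continuousOn ha).log
      fun t ht => (div_pos pi_pos (arccos_pos.2 ht.2)).ne'
  · exact continuous_arccos.continuousOn.rpow_const fun t ht => Or.inl (ha t ht)

lemma hasDerivAt_arccosPotential (hδ : δ ≠ 1) (ht : t ∈ Ioo (-1 : ℝ) 1) :
    HasDerivAt (arccosPotential δ)
      ((if δ = 0 then 1 else -δ) * arccosPotential (δ - 1) t * (1 - t ^ 2) ^ (-(1 / 2) : ℝ)) t := by
  have ha := arccos_pos.2 ht.2
  have hd := hasDerivAt_arccos ht.1.ne' ht.2.ne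
  have hsqrt : 1 / √(1 - t ^ 2) = (1 - t ^ 2) ^ (-(1 / 2) : ℝ) := by
    rw [sqrt_eq_rpow, rpow_neg (one_sub_sq_pos_of_mem_Ioo ht).le, one_div]
  rw [arccosPotential, if_neg (sub_ne_zero.2 hδ), ← hsqrt]
  by_cases h : δ = 0
  · subst h
    have hF : arccosPotential 0 = fun x => log (π / arccos x) := funext fun x => if_pos rfl
    rw [hF, if_pos rfl, zero_sub, rpow_neg_one]
    convert ((hasDerivAt_const t π).div hd ha.ne').log (div_pos pi_pos ha).ne' using 1
    · rfl
    · simp only [Pi.div_apply]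
      field_simp
      ring
  · have hF : arccosPotential δ = fun x => arccos x ^ δ := funext fun x => if_neg h
    rw [hF, if_neg h]
    convert hd.rpow_const (p := δ) (Or.inl ha.ne') using 1
    ring

end ArccosPotential

lemma intervalIntegrable_one_sub_sq_rpow {e : ℝ} (he : -1 < e) :
    IntervalIntegrable (fun t : ℝ => (1 - t ^ 2) ^ e) volume (-1) 1 := by
  have hsub : IntervalIntegrable (fun t : ℝ => (1 - t) ^ e) volume (-1) 1 := by
    convert (intervalIntegrable_rpow' he (a := 2) (b := 0)).comp_sub_left 1 using 1 <;> norm_num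
  have hadd : IntervalIntegrable (fun t : ℝ => (1 + t) ^ e) volume (-1) 1 := by
    convert (intervalIntegrable_rpow' he (a := 0) (b := 2)).comp_add_left 1 using 1 <;> norm_num
  -- `(1 - t) ^ e * (1 + t) ^ e`: on each half of `[-1, 1]` one factor is continuous.
  have hleft : IntervalIntegrable (fun t : ℝ => (1 - t) ^ e * (1 + t) ^ e) volume (-1) 0 := by
    refine (hadd.mono_set (uIcc_subset_uIcc_left (by simp))).continuousOn_mul ?_
    refine ContinuousOn.rpow_const (by fun_prop) fun t ht => Or.inl ?_
    rw [uIcc_of_le (by norm_num)] at ht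
    linarith [ht.2]
  have hright : IntervalIntegrable (fun t : ℝ => (1 - t) ^ e * (1 + t) ^ e) volume 0 1 := by
    refine (hsub.mono_set (uIcc_subset_uIcc_right (by simp))).mul_continuousOn ?_
    refine ContinuousOn.rpow_const (by fun_prop) fun t ht => Or.inl ?_
    rw [uIcc_of_le (by norm_num)] at ht
    linarith [ht.1]
  refine (intervalIntegrable_congr fun t ht => ?_).1 (hleft.trans hright)
  rw [uIoc_of_le (by norm_num)] at ht
  rw [← mul_rpow (by linarith [ht.2]) (by linarith [ht.1])]
  ring_nf

noncomputable def potentialMoment (δ σ : ℝ) (P : ℝ[X]) : ℝ :=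
  ∫ t in (-1 : ℝ)..1, arccosPotential δ t * P.eval t * (1 - t ^ 2) ^ σ

section PotentialMoment

variable {δ σ : ℝ}

lemma exists_abs_potential_integrand_le {e : ℝ} (hδ : δ ≤ 0) (he : e < δ / 2) (P : ℝ[X]) :
    ∃ C, ∀ t ∈ Ioo (-1 : ℝ) 1,
      |arccosPotential δ t * P.eval t * (1 - t ^ 2) ^ σ| ≤ C * (1 - t ^ 2) ^ (e + σ) := by
  obtain ⟨C₁, hC₁⟩ := exists_arccosPotential_le hδ he
  obtain ⟨C₂, hC₂⟩ :=
    (isCompact_Icc (a := (-1 : ℝ)) (b := 1)).exists_bound_of_continuousOn P.continuous.continuousOn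
  refine ⟨C₁ * C₂, fun t ht => ?_⟩
  have h₀ := one_sub_sq_pos_of_mem_Ioo ht
  have hF := arccosPotential_pos (δ := δ) ht
  have hP : |P.eval t| ≤ C₂ := hC₂ t (Ioo_subset_Icc_self ht)
  rw [abs_mul, abs_mul, abs_of_pos hF, abs_of_pos (rpow_pos_of_pos h₀ σ), rpow_add h₀]
  calc arccosPotential δ t * |P.eval t| * (1 - t ^ 2) ^ σ
      ≤ C₁ * (1 - t ^ 2) ^ e * C₂ * (1 - t ^ 2) ^ σ := by
        gcongr
        · exact hF.le.trans (hC₁ t ht)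
        · exact hC₁ t ht
    _ = C₁ * C₂ * ((1 - t ^ 2) ^ e * (1 - t ^ 2) ^ σ) := by ring

lemma intervalIntegrable_potential_integrand (hδ : δ ≤ 0) (hσ : -1 < δ / 2 + σ) (P : ℝ[X]) :
    IntervalIntegrable (fun t => arccosPotential δ t * P.eval t * (1 - t ^ 2) ^ σ)
      volume (-1) 1 := by
  obtain ⟨C, hC⟩ :=
    exists_abs_potential_integrand_le (e := (δ / 2 - 1 - σ) / 2) (σ := σ) hδ (by linarith) P
  have hIoc : volume.restrict (uIoc (-1 : ℝ) 1) = volume.restrict (Ioo (-1) 1) := by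
    rw [uIoc_of_le (by norm_num), Measure.restrict_congr_set Ioo_ae_eq_Ioc]
  refine ((intervalIntegrable_one_sub_sq_rpow (e := (δ / 2 - 1 - σ) / 2 + σ)
    (by linarith)).const_mul C).mono_fun' ?_ ?_
  · rw [hIoc]
    exact (((continuousOn_arccosPotential).mul P.continuous.continuousOn).mul
      (ContinuousOn.rpow_const (by fun_prop) fun t ht =>
        Or.inl (one_sub_sq_pos_of_mem_Ioo ht).ne')).aestronglyMeasurable measurableSet_Ioo
  · rw [hIoc]
    filter_upwards [ae_restrict_mem measurableSet_Ioo] with t ht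
    exact (norm_eq_abs _).trans_le (hC t ht)

lemma tendsto_potential_integrand (hδ : δ ≤ 0) (hσ : 0 < δ / 2 + σ) (P : ℝ[X]) :
    Tendsto (fun t => arccosPotential δ t * P.eval t * (1 - t ^ 2) ^ σ) (𝓝[>] (-1)) (𝓝 0) ∧
      Tendsto (fun t => arccosPotential δ t * P.eval t * (1 - t ^ 2) ^ σ) (𝓝[<] 1) (𝓝 0) := by
  obtain ⟨C, hC⟩ := exists_abs_potential_integrand_le (e := (δ / 2 - σ) / 2) (σ := σ) hδ
    (by linarith) P
  have he : 0 < (δ / 2 - σ) / 2 + σ := by linarith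
  have hbound : ∀ a : ℝ, a ^ 2 = 1 →
      Tendsto (fun t : ℝ => C * (1 - t ^ 2) ^ ((δ / 2 - σ) / 2 + σ)) (𝓝 a) (𝓝 0) := by
    intro a ha
    have hcont : Continuous fun t : ℝ => C * (1 - t ^ 2) ^ ((δ / 2 - σ) / 2 + σ) :=
      continuous_const.mul ((by fun_prop : Continuous fun t : ℝ => 1 - t ^ 2).rpow_const
        fun _ => Or.inr he.le)
    simpa [ha, zero_rpow he.ne'] using hcont.tendsto a
  constructor
  · refine squeeze_zero_norm' ?_ ((hbound (-1) (by norm_num)).mono_left nhdsWithin_le_nhds)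
    filter_upwards [Ioo_mem_nhdsGT (by norm_num : (-1 : ℝ) < 1)] with t ht
    exact hC t ht
  · refine squeeze_zero_norm' ?_ ((hbound 1 (by norm_num)).mono_left nhdsWithin_le_nhds)
    filter_upwards [Ioo_mem_nhdsLT (by norm_num : (-1 : ℝ) < 1)] with t ht
    exact hC t ht

lemma hasDerivAt_potential_integrand {t : ℝ} (hδ : δ ≠ 1) (ht : t ∈ Ioo (-1 : ℝ) 1)
    (P : ℝ[X]) :
    HasDerivAt (fun x => arccosPotential δ x * P.eval x * (1 - x ^ 2) ^ σ)
      ((if δ = 0 then 1 else -δ) *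
          (arccosPotential (δ - 1) t * P.eval t * (1 - t ^ 2) ^ (σ - 1 / 2))
        + arccosPotential δ t * (weightedDerivative σ P).eval t * (1 - t ^ 2) ^ (σ - 1)) t := by
  have h₀ := one_sub_sq_pos_of_mem_Ioo ht
  have hw := ((hasDerivAt_pow 2 t).const_sub 1).rpow_const (p := σ) (Or.inl h₀.ne')
  refine (((hasDerivAt_arccosPotential hδ ht).mul (P.hasDerivAt t)).mul hw).congr_deriv ?_
  have hσ : (1 - t ^ 2) ^ σ = (1 - t ^ 2) ^ (σ - 1) * (1 - t ^ 2) := by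
    rw [← rpow_add_one h₀.ne', sub_add_cancel]
  have hσ' : (1 - t ^ 2) ^ (σ - 1 / 2) = (1 - t ^ 2) ^ (-(1 / 2) : ℝ) * (1 - t ^ 2) ^ σ := by
    rw [← rpow_add h₀]
    ring_nf
  rw [eval_weightedDerivative, hσ', hσ, Pi.mul_apply]
  ring

theorem potentialMoment_integration_by_parts (hδ : δ ≤ 0) (hσ : 0 < δ / 2 + σ) (P : ℝ[X]) :
    (if δ = 0 then 1 else -δ) * potentialMoment (δ - 1) (σ - 1 / 2) P
      + potentialMoment δ (σ - 1) (weightedDerivative σ P) = 0 := by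
  have h₁ := intervalIntegrable_potential_integrand (δ := δ - 1) (σ := σ - 1 / 2) (by linarith)
    (by linarith) P
  have h₂ := intervalIntegrable_potential_integrand (σ := σ - 1) hδ (by linarith)
    (weightedDerivative σ P)
  obtain ⟨hlim₁, hlim₂⟩ := tendsto_potential_integrand hδ hσ P
  rw [potentialMoment, potentialMoment, ← intervalIntegral.integral_const_mul,
    ← integral_add (h₁.const_mul _) h₂,
    integral_eq_sub_of_hasDerivAt_of_tendsto (by norm_num)
      (fun t ht => hasDerivAt_potential_integrand (by linarith) ht P)
      ((h₁.const_mul _).add h₂) hlim₁ hlim₂, sub_self]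

lemma potentialMoment_C_mul (c : ℝ) (P : ℝ[X]) :
    potentialMoment δ σ (C c * P) = c * potentialMoment δ σ P := by
  simp only [potentialMoment, eval_mul, eval_C, ← intervalIntegral.integral_const_mul]
  congr 1 with t
  ring

lemma potentialMoment_neg (P : ℝ[X]) : potentialMoment δ σ (-P) = -potentialMoment δ σ P := by
  simp [potentialMoment, ← intervalIntegral.integral_neg]

lemma potentialMoment_sub (hδ : δ ≤ 0) (hσ : -1 < δ / 2 + σ) (P Q : ℝ[X]) :
    potentialMoment δ σ (P - Q) = potentialMoment δ σ P - potentialMoment δ σ Q := by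
  rw [potentialMoment, potentialMoment, potentialMoment,
    ← integral_sub (intervalIntegrable_potential_integrand hδ hσ P)
      (intervalIntegrable_potential_integrand hδ hσ Q)]
  congr 1 with t
  simp only [eval_sub]
  ring

lemma potentialMoment_pos (hδ : δ ≤ 0) (hσ : -1 < δ / 2 + σ) {P : ℝ[X]}
    (hP : ∀ t ∈ Ioo (-1 : ℝ) 1, 0 < P.eval t) : 0 < potentialMoment δ σ P := by
  refine intervalIntegral_pos_of_pos_on (intervalIntegrable_potential_integrand hδ hσ P)
    (fun t ht => ?_) (by norm_num)
  have := arccosPotential_pos (δ := δ) ht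
  have := hP t ht
  have := one_sub_sq_pos_of_mem_Ioo ht
  positivity

end PotentialMoment

section GegenbauerMoments

variable {l δ p γ : ℝ}

lemma potentialMoment_gegenbauer_succ (hδ : δ ≤ 0) (hδl : -(2 * l + 1) < δ) (n : ℕ) :
    ((n : ℝ) + 1) * ((n : ℝ) + 2 * l + 1) * potentialMoment δ (l - 1 / 2) (gegenbauer l (n + 1)) =
      2 * l * (if δ = 0 then 1 else -δ) * potentialMoment (δ - 1) l (gegenbauer (l + 1) n) := by
  have hparts := potentialMoment_integration_by_parts (σ := l + 1 / 2) hδ (by linarith)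
    (gegenbauer (l + 1) n)
  have hrel := congrArg (potentialMoment δ (l - 1 / 2))
    (C_mul_weightedDerivative_gegenbauer_add_one_param l n)
  rw [show l + 1 / 2 - 1 / 2 = l by ring, show l + 1 / 2 - 1 = l - 1 / 2 by ring] at hparts
  rw [potentialMoment_C_mul, potentialMoment_C_mul] at hrel
  linear_combination hrel - 2 * l * hparts

lemma potentialMoment_gegenbauer_one (hγ : γ < 0) (hγp : 0 < γ + 2 * p) :
    potentialMoment γ (p - 1) (gegenbauer p 1) =
      -γ * potentialMoment (γ - 1) (p - 1 / 2) (gegenbauer p 0) := by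
  have hparts := potentialMoment_integration_by_parts (σ := p) hγ.le (by linarith) (gegenbauer p 0)
  rw [weightedDerivative_gegenbauer_zero, potentialMoment_neg, if_neg hγ.ne] at hparts
  linarith

lemma potentialMoment_gegenbauer_add_two (hγ : γ < 0) (hγp : 0 < γ + 2 * p) (j : ℕ) :
    ((j : ℝ) + 2) * ((j : ℝ) + 1 + 2 * p) * potentialMoment γ (p - 1) (gegenbauer p (j + 2)) =
      2 * ((j : ℝ) + 1 + p) * -γ * potentialMoment (γ - 1) (p - 1 / 2) (gegenbauer p (j + 1))
        + ((j : ℝ) + 1) * ((j : ℝ) + 2 * p) * potentialMoment γ (p - 1) (gegenbauer p j) := by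
  have hparts := potentialMoment_integration_by_parts (σ := p) hγ.le (by linarith)
    (gegenbauer p (j + 1))
  have hrel := congrArg (potentialMoment γ (p - 1)) (C_mul_weightedDerivative_gegenbauer_succ p j)
  rw [if_neg hγ.ne] at hparts
  rw [potentialMoment_C_mul, potentialMoment_sub hγ.le (by linarith), potentialMoment_C_mul,
    potentialMoment_C_mul] at hrel
  linear_combination hrel - 2 * ((j : ℝ) + 1 + p) * hparts

lemma potentialMoment_gegenbauer_succ_pos (hl : 0 < l) (hδ : δ ≤ 0) (hδl : -(2 * l + 1) < δ)
    {n : ℕ} (hK : 0 < potentialMoment (δ - 1) l (gegenbauer (l + 1) n)) :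
    0 < potentialMoment δ (l - 1 / 2) (gegenbauer l (n + 1)) := by
  have hc : 0 < (if δ = 0 then (1 : ℝ) else -δ) := by
    split_ifs with h
    exacts [one_pos, neg_pos.2 (hδ.lt_of_ne h)]
  refine (mul_pos_iff_of_pos_left (by positivity : (0 : ℝ) < (n + 1) * (n + 2 * l + 1))).1 ?_
  rw [potentialMoment_gegenbauer_succ hδ hδl]
  exact mul_pos (mul_pos (by positivity) hc) hK

lemma potentialMoment_gegenbauer_add_two_pos (hγ : γ < 0) (hγp : 0 < γ + 2 * p) {j : ℕ}
    (hJ : 0 < potentialMoment (γ - 1) (p - 1 / 2) (gegenbauer p (j + 1)))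
    (hK : 0 < potentialMoment γ (p - 1) (gegenbauer p j)) :
    0 < potentialMoment γ (p - 1) (gegenbauer p (j + 2)) := by
  have hp : 0 < p := by linarith
  refine (mul_pos_iff_of_pos_left (by positivity : (0 : ℝ) < (j + 2) * (j + 1 + 2 * p))).1 ?_
  rw [potentialMoment_gegenbauer_add_two hγ hγp]
  exact add_pos (mul_pos (mul_pos (by positivity) (neg_pos.2 hγ)) hJ) (mul_pos (by positivity) hK)

end GegenbauerMoments

theorem potentialMoment_gegenbauer_pos (n : ℕ) :
    (∀ l δ : ℝ, 0 < l → -(2 * l + 1) < δ → δ ≤ 0 →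
        0 < potentialMoment δ (l - 1 / 2) (gegenbauer l n)) ∧
      ∀ p γ : ℝ, γ < 0 → 0 < γ + 2 * p → 0 < potentialMoment γ (p - 1) (gegenbauer p n) := by
  induction n using Nat.strong_induction_on with | _ n ih => ?_
  refine ⟨fun l δ hl hδl hδ => ?_, fun p γ hγ hγp => ?_⟩
  · cases n with
    | zero => exact potentialMoment_pos hδ (by linarith) (by simp)
    | succ m =>
      have hK := (ih m (by omega)).2 (l + 1) (δ - 1) (by linarith) (by linarith)
      rw [add_sub_cancel_right] at hK
      exact potentialMoment_gegenbauer_succ_pos hl hδ hδl hK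
  · have hJ : ∀ m < n, 0 < potentialMoment (γ - 1) (p - 1 / 2) (gegenbauer p m) :=
      fun m hm => (ih m hm).1 p (γ - 1) (by linarith) (by linarith) (by linarith)
    match n with
    | 0 => exact potentialMoment_pos hγ.le (by linarith) (by simp)
    | 1 =>
      rw [potentialMoment_gegenbauer_one hγ hγp]
      exact mul_pos (neg_pos.2 hγ) (hJ 0 one_pos)
    | j + 2 =>
      exact potentialMoment_gegenbauer_add_two_pos hγ hγp (hJ (j + 1) (by omega))
        ((ih j (by omega)).2 p γ hγ hγp)

/-- Let `λ > 0` and `-(2λ+1) < δ ≤ 0`, with `F_δ(t) = (arccos t)^δ` for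
`δ ≠ 0` and `F_0(t) = log (π / arccos t)`.  Then for every `n ≥ 0`,
`∫_{-1}^1 F_δ(t) C_n^λ(t) (1-t^2)^(λ-1/2) dt > 0`. -/
theorem gegenbauer_coeff_neg_power_pos (l δ : ℝ) (hl : 0 < l)
    (hδ : δ ∈ Set.Ioc (-(2 * l + 1)) 0) (n : ℕ) :
    0 < ∫ t in (-1:ℝ)..1,
        (if δ = 0 then Real.log (Real.pi / Real.arccos t) else (Real.arccos t) ^ δ) *
          (gegenbauer l n).eval t * (1 - t^2) ^ (l - 1/2) :=
  (potentialMoment_gegenbauer_pos n).1 l δ hl hδ.1 hδ.2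
end

section
/- Let f ∈ L^1(𝕋) have Fourier series Σ_{n∈ℤ} i c_n e^{2πinx} with c_n = -c_{-n} ≥ 0 for all n > 0 (a sine series with nonnegative coefficients). Then Σ_{n>0} c_n/n < ∞. -/
/-!
Since `f̂ n - f̂ (-n) = -2i ∫ f(t) sin(2πnt) dt`, the partial sums of `∑ c_n / n` are integrals of
`f` against the partial sums of the sine series `∑ sin(nx) / n`. These are bounded uniformly in
`x` and in the number of terms (here by `4`), so `∑_{n ≤ N} c_n / n ≤ 4 ‖f‖₁`, and the
nonnegativity of the `c_n` gives summability.
-/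

open MeasureTheory Finset Real

theorem abs_sin_nat_mul_le (x : ℝ) (n : ℕ) : |sin (n * x)| ≤ n * |sin x| := by
  induction n with
  | zero => simp
  | succ n ih =>
    calc |sin ((n + 1 : ℕ) * x)| = |sin (n * x) * cos x + cos (n * x) * sin x| := by
          push_cast; rw [add_mul, one_mul, sin_add]
      _ ≤ |sin (n * x)| * |cos x| + |cos (n * x)| * |sin x| := by
          rw [← abs_mul, ← abs_mul]; exact abs_add_le _ _
      _ ≤ n * |sin x| * 1 + 1 * |sin x| := by
          gcongr
          · exact abs_cos_le_one x
          · exact abs_cos_le_one _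
      _ = (n + 1 : ℕ) * |sin x| := by push_cast; ring

theorem two_mul_sin_half_mul_sum_sin (x : ℝ) (n : ℕ) :
    2 * sin (x / 2) * ∑ i ∈ range n, sin ((i + 1) * x) =
      cos (x / 2) - cos ((2 * n + 1) * x / 2) := by
  induction n with
  | zero => simp
  | succ n ih =>
    rw [sum_range_succ, mul_add, ih, two_mul_sin_mul_sin, ← cos_neg (x / 2 - _)]
    push_cast
    ring_nf

theorem abs_sin_half_mul_abs_sum_sin_le (x : ℝ) (n : ℕ) :
    |sin (x / 2)| * |∑ i ∈ range n, sin ((i + 1) * x)| ≤ 1 := by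
  have h := abs_sub (cos (x / 2)) (cos ((2 * n + 1) * x / 2))
  rw [← two_mul_sin_half_mul_sum_sin, abs_mul, abs_mul, abs_two] at h
  linarith [abs_cos_le_one (x / 2), abs_cos_le_one ((2 * n + 1) * x / 2)]

theorem norm_sum_Ico_smul_le_of_antitone {E : Type*} [NormedAddCommGroup E] [NormedSpace ℝ E]
    {b : ℕ → ℝ} {a : ℕ → E} {B : ℝ} (hb : Antitone b) (hb0 : ∀ i, 0 ≤ b i)
    (ha : ∀ k, ‖∑ i ∈ range k, a i‖ ≤ B) (m n : ℕ) :
    ‖∑ i ∈ Ico m n, b i • a i‖ ≤ 2 * b m * B := by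
  have hB : 0 ≤ B := by simpa using ha 0
  rcases le_or_gt n m with hnm | hmn
  · rw [Ico_eq_empty_of_le hnm, sum_empty, norm_zero]
    have := hb0 m
    positivity
  have htel : ∑ i ∈ Ico m (n - 1), (b i - b (i + 1)) = b m - b (n - 1) := by
    rw [← neg_sub, ← sum_Ico_sub b (by omega : m ≤ n - 1), ← sum_neg_distrib]
    simp only [neg_sub]
  rw [sum_Ico_by_parts b a hmn]
  calc _ ≤ ‖b (n - 1) • ∑ i ∈ range n, a i‖ + ‖b m • ∑ i ∈ range m, a i‖
          + ‖∑ i ∈ Ico m (n - 1), (b (i + 1) - b i) • ∑ j ∈ range (i + 1), a j‖ :=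
        norm_sub_le_of_le (norm_sub_le _ _) le_rfl
    _ ≤ b (n - 1) * B + b m * B + ∑ i ∈ Ico m (n - 1), (b i - b (i + 1)) * B := by
        gcongr
        · rw [norm_smul, Real.norm_of_nonneg (hb0 _)]
          exact mul_le_mul_of_nonneg_left (ha n) (hb0 _)
        · rw [norm_smul, Real.norm_of_nonneg (hb0 _)]
          exact mul_le_mul_of_nonneg_left (ha m) (hb0 _)
        · refine (norm_sum_le _ _).trans (sum_le_sum fun i _ => ?_)
          rw [norm_smul, Real.norm_of_nonpos (sub_nonpos.2 (hb (Nat.le_succ i))), neg_sub]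
          gcongr
          · exact sub_nonneg.2 (hb (Nat.le_succ i))
          · exact ha _
    _ = 2 * b m * B := by rw [← sum_mul, htel]; ring

theorem abs_sum_sin_div_le_mul_abs_sin_half (x : ℝ) (n : ℕ) :
    |∑ i ∈ range n, sin ((i + 1) * x) / (i + 1)| ≤ 2 * n * |sin (x / 2)| := by
  have hsin : |sin x| ≤ 2 * |sin (x / 2)| := by
    have hdouble : sin x = 2 * sin (x / 2) * cos (x / 2) := by rw [← sin_two_mul]; ring_nf
    rw [hdouble, abs_mul, abs_mul, abs_two]
    exact mul_le_of_le_one_right (by positivity) (abs_cos_le_one _)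
  calc |∑ i ∈ range n, sin ((i + 1) * x) / (i + 1)|
      ≤ ∑ i ∈ range n, |sin ((i + 1) * x) / (i + 1)| := abs_sum_le_sum_abs _ _
    _ ≤ ∑ _i ∈ range n, 2 * |sin (x / 2)| := by
        refine sum_le_sum fun i _ => ?_
        have hi : (0 : ℝ) < i + 1 := by positivity
        have := abs_sin_nat_mul_le x (i + 1)
        push_cast at this
        rw [abs_div, abs_of_pos hi, div_le_iff₀ hi]
        nlinarith [abs_nonneg (sin x)]
    _ = 2 * n * |sin (x / 2)| := by rw [sum_const, card_range, nsmul_eq_mul]; ring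

theorem abs_sum_sin_div_le (x : ℝ) (n : ℕ) :
    |∑ i ∈ range n, sin ((i + 1) * x) / (i + 1)| ≤ 4 := by
  have head := abs_sum_sin_div_le_mul_abs_sin_half x
  have hdirichlet := abs_sin_half_mul_abs_sum_sin_le x
  have hs := abs_nonneg (sin (x / 2))
  generalize |sin (x / 2)| = s at head hdirichlet hs
  rcases hs.eq_or_lt with rfl | hs
  · exact (head n).trans (by rw [mul_zero]; norm_num)
  set M := ⌊s⁻¹⌋₊
  have hMs : M * s ≤ 1 :=
    calc (M : ℝ) * s ≤ s⁻¹ * s := by gcongr; exact Nat.floor_le (inv_nonneg.2 hs.le)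
      _ = 1 := inv_mul_cancel₀ hs.ne'
  have hsM : 1 < (M + 1) * s :=
    calc 1 = s⁻¹ * s := (inv_mul_cancel₀ hs.ne').symm
      _ < (M + 1) * s := by gcongr; exact Nat.lt_floor_add_one _
  -- Split at `M ≈ 1 / |sin (x / 2)|`: the first `M` terms are bounded termwise, the rest by
  -- summation by parts against the Dirichlet kernel bound.
  rcases le_or_gt n M with hnM | hMn
  · calc _ ≤ 2 * n * s := head n
      _ ≤ 2 * M * s := by gcongr
      _ ≤ 4 := by linarith
  have hpartial : ∀ k, ‖∑ i ∈ range k, sin ((i + 1) * x)‖ ≤ s⁻¹ := fun k => by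
    rw [Real.norm_eq_abs, ← mul_one s⁻¹, le_inv_mul_iff₀ hs]
    exact hdirichlet k
  have tail := norm_sum_Ico_smul_le_of_antitone (b := fun i : ℕ => ((i : ℝ) + 1)⁻¹)
    (fun i j hij => inv_anti₀ (by positivity) (by gcongr)) (fun i => by positivity) hpartial M n
  simp only [smul_eq_mul, inv_mul_eq_div, Real.norm_eq_abs] at tail
  have htail : 2 * ((M : ℝ) + 1)⁻¹ * s⁻¹ ≤ 2 := by
    rw [mul_assoc, ← mul_inv, mul_le_iff_le_one_right two_pos, inv_le_one₀ (by positivity)]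
    exact hsM.le
  rw [← sum_range_add_sum_Ico _ hMn.le]
  calc _ ≤ _ + _ := abs_add_le _ _
    _ ≤ 2 * M * s + 2 := add_le_add (head M) (tail.trans htail)
    _ ≤ 4 := by linarith

section Fourier

variable {T : ℝ}

open AddCircle

theorem fourier_coe_im (n : ℤ) (x : ℝ) :
    (fourier n (x : AddCircle T)).im = sin (n * (2 * π * x / T)) := by
  rw [fourier_coe_apply, ← Complex.exp_ofReal_mul_I_im]
  push_cast
  ring_nf

theorem abs_sum_fourier_im_div_le (t : AddCircle T) (n : ℕ) :
    |∑ i ∈ range n, (fourier (i + 1) t).im / (i + 1)| ≤ 4 := by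
  induction t using QuotientAddGroup.induction_on with
  | H x =>
    simp only [fourier_coe_im]
    push_cast
    exact abs_sum_sin_div_le _ n

theorem fourierCoeff_sub_fourierCoeff_neg [Fact (0 < T)] {f : AddCircle T → ℂ}
    (hf : Integrable f haarAddCircle) (n : ℤ) :
    fourierCoeff f n - fourierCoeff f (-n) =
      -(2 * Complex.I) * ∫ t, (fourier n t).im * f t ∂haarAddCircle := by
  rw [fourierCoeff, fourierCoeff, neg_neg, ← integral_sub (hf.fourier_smul _) (hf.fourier_smul _),
    ← integral_const_mul]
  congr 1 with t
  rw [smul_eq_mul, smul_eq_mul, ← sub_mul, fourier_neg, ← neg_sub, Complex.sub_conj]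
  push_cast
  ring

theorem norm_sum_fourierCoeff_sub_neg_div_le [Fact (0 < T)] {f : AddCircle T → ℂ}
    (hf : Integrable f haarAddCircle) (n : ℕ) :
    ‖∑ i ∈ range n, (fourierCoeff f (i + 1) - fourierCoeff f (-(i + 1))) / (i + 1)‖ ≤
      8 * ∫ t, ‖f t‖ ∂haarAddCircle := by
  have hint (i : ℕ) :
      Integrable (fun t => ((fourier (i + 1) t).im / (i + 1) : ℝ) * f t) haarAddCircle := by
    refine hf.bdd_mul (c := 1) (by fun_prop) (ae_of_all _ fun t => ?_)
    have hi : (0 : ℝ) < i + 1 := by positivity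
    rw [Complex.norm_real, Real.norm_eq_abs, abs_div, abs_of_pos hi, div_le_one hi]
    calc |(fourier (i + 1) t).im| ≤ ‖(fourier (i + 1) t : ℂ)‖ := Complex.abs_im_le_norm _
      _ = 1 := Circle.norm_coe _
      _ ≤ i + 1 := by simp
  have hterm (i : ℕ) : (fourierCoeff f (i + 1) - fourierCoeff f (-(i + 1))) / (i + 1) =
      -(2 * Complex.I) * ∫ t, ((fourier (i + 1) t).im / (i + 1) : ℝ) * f t ∂haarAddCircle := by
    rw [fourierCoeff_sub_fourierCoeff_neg hf, mul_div_assoc, ← integral_div]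
    refine congrArg _ (integral_congr_ae (ae_of_all _ fun t => ?_))
    push_cast
    ring
  rw [sum_congr rfl fun i _ => hterm i, ← mul_sum, ← integral_finsetSum _ fun i _ => hint i,
    norm_mul, norm_neg, norm_mul, Complex.norm_two, Complex.norm_I, mul_one]
  simp_rw [← sum_mul, ← Complex.ofReal_sum]
  calc _ ≤ 2 * ∫ t, 4 * ‖f t‖ ∂haarAddCircle := by
        gcongr
        refine norm_integral_le_of_norm_le (hf.norm.const_mul 4) (ae_of_all _ fun t => ?_)
        rw [norm_mul, Complex.norm_real, Real.norm_eq_abs]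
        exact mul_le_mul_of_nonneg_right (abs_sum_fourier_im_div_le t n) (norm_nonneg _)
    _ = 8 * ∫ t, ‖f t‖ ∂haarAddCircle := by rw [integral_const_mul]; ring

end Fourier

theorem sine_series_nonneg_coeff_summable_general
    (f : AddCircle (1 : ℝ) → ℂ) (hf : Integrable f)
    (c : ℤ → ℝ)
    (hc : ∀ n : ℤ, fourierCoeff f n = Complex.I * (c n : ℂ))
    (hsym : ∀ n : ℤ, c (-n) = -c n)
    (hpos : ∀ n : ℤ, 0 < n → 0 ≤ c n) :
    Summable (fun n : ℕ => c (n + 1) / ((n : ℝ) + 1)) := by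
  have hf' : Integrable f AddCircle.haarAddCircle := by
    simpa [AddCircle.volume_eq_smul_haarAddCircle] using hf
  have hterm (i : ℕ) : (fourierCoeff f (i + 1) - fourierCoeff f (-(i + 1))) / (i + 1) =
      2 * Complex.I * (c (i + 1) / (i + 1) : ℝ) := by
    rw [hc, hc, hsym]
    push_cast
    ring
  refine summable_of_sum_range_le (c := 4 * ∫ t, ‖f t‖ ∂AddCircle.haarAddCircle)
    (fun n => div_nonneg (hpos _ (by positivity)) (by positivity))
    fun n => (le_abs_self _).trans ?_
  have hbound := norm_sum_fourierCoeff_sub_neg_div_le hf' n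
  rw [sum_congr rfl fun i _ => hterm i, ← mul_sum, ← Complex.ofReal_sum, norm_mul, norm_mul,
    Complex.norm_two, Complex.norm_I, mul_one, Complex.norm_real, Real.norm_eq_abs] at hbound
  linarith

/-- If `f ∈ L¹(𝕋)` (real-valued) has Fourier series
`∑_{n ∈ ℤ} i c_n e^{2πinx}` with `c_{-n} = -c_n` and `c_n ≥ 0` for `n > 0`
(a sine series with nonnegative coefficients), then `∑_{n>0} c_n / n < ∞`. -/
theorem sine_series_nonneg_coeff_summable
    (f : AddCircle (1 : ℝ) → ℂ) (hf : Integrable f) (hreal : ∀ x, (f x).im = 0)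
    (c : ℤ → ℝ)
    (hc : ∀ n : ℤ, fourierCoeff f n = Complex.I * (c n : ℂ))
    (hsym : ∀ n : ℤ, c (-n) = -c n)
    (hpos : ∀ n : ℤ, 0 < n → 0 ≤ c n) :
    Summable (fun n : ℕ => c (n + 1) / ((n : ℝ) + 1)) :=
  sine_series_nonneg_coeff_summable_general f hf c hc hsym hpos
end
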